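/- arXiv:2105.02989 — 3 statements merged into one kernel-verified Lean document; each statement's English description precedes it below -/
import Mathlib

section
/- Let (ψ(h_k))_{k∈ℕ} be a sequence of positive reals satisfying ψ(h_{k+1}) ≥ (1+δ)ψ(h_k) for all k, for some δ > 0. Define a_{k,j} = ψ(h_k)ψ(h_j)/(ψ(h_k)+ψ(h_j))². Then sup_j ∑_k a_{k,j} ≤ C_δ for a constant C_δ depending only on δ. -/
/-- For a lacunary sequence of positive reals ψ(h_k) with ratio
at least 1+δ, the row sums of the kernel a_{k,j} = ψ_k ψ_j /(ψ_k+ψ_j)² are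
uniformly bounded by a constant depending only on δ. -/
theorem paley_kernel_row_sums_bounded (δ : ℝ) (hδ : 0 < δ) :
    ∃ C : ℝ, ∀ ψ : ℕ → ℝ, (∀ k, 0 < ψ k) → (∀ k, (1 + δ) * ψ k ≤ ψ (k + 1)) →
      ∀ j : ℕ, ∑' k : ℕ, ψ k * ψ j / (ψ k + ψ j) ^ 2 ≤ C := by
  set r : ℝ := (1 + δ)⁻¹ with hrdef
  have hδ1 : (0:ℝ) < 1 + δ := by linarith
  have hr0 : 0 < r := inv_pos.mpr hδ1
  have hr1 : r < 1 := by
    rw [hrdef]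
    rw [inv_lt_one_iff₀]
    right; linarith
  have hgeo : Summable (fun n : ℕ => r ^ n) :=
    summable_geometric_of_lt_one hr0.le hr1
  refine ⟨2 * (1 - r)⁻¹, ?_⟩
  intro ψ hψ hlac j
  -- growth of the lacunary sequence
  have grow : ∀ n k, (1 + δ) ^ n * ψ k ≤ ψ (k + n) := by
    intro n
    induction n with
    | zero => intro k; simp
    | succ n ih =>
      intro k
      have h1 := ih k
      have h2 := hlac (k + n)
      have hpk := hψ k
      calc (1 + δ) ^ (n + 1) * ψ k = (1 + δ) * ((1 + δ) ^ n * ψ k) := by ring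
        _ ≤ (1 + δ) * ψ (k + n) := by nlinarith [pow_pos hδ1 n]
        _ ≤ ψ (k + (n + 1)) := by
            have : k + (n + 1) = (k + n) + 1 := by omega
            rw [this]; exact h2
  -- the key pointwise bound for k ≤ m
  have aux : ∀ k m : ℕ, k ≤ m → ψ k * ψ m / (ψ k + ψ m) ^ 2 ≤ r ^ (m - k) := by
    intro k m hkm
    have hpk := hψ k
    have hpm := hψ m
    have hg : (1 + δ) ^ (m - k) * ψ k ≤ ψ m := by
      have := grow (m - k) k
      rwa [Nat.add_sub_cancel' hkm] at this
    have hrp : r ^ (m - k) = ((1 + δ) ^ (m - k))⁻¹ := by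
      rw [hrdef, inv_pow]
    rw [hrp, div_le_iff₀ (by positivity), ← div_eq_inv_mul] at *
    rw [le_div_iff₀ (pow_pos hδ1 _)]
    nlinarith [pow_pos hδ1 (m - k), sq_nonneg (ψ k)]
  -- pointwise bound in both regimes
  have bound : ∀ k, ψ k * ψ j / (ψ k + ψ j) ^ 2 ≤ r ^ (k - j) * r ^ (j - k) := by
    intro k
    rcases le_total k j with h | h
    · have : k - j = 0 := Nat.sub_eq_zero_of_le h
      rw [this, pow_zero, one_mul]
      exact aux k j h
    · have : j - k = 0 := Nat.sub_eq_zero_of_le h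
      rw [this, pow_zero, mul_one]
      have := aux j k h
      rwa [mul_comm (ψ j) (ψ k), add_comm (ψ j) (ψ k)] at this
  have hgpos : ∀ k, (0:ℝ) ≤ r ^ (k - j) * r ^ (j - k) := by
    intro k; positivity
  have hapos : ∀ k, (0:ℝ) ≤ ψ k * ψ j / (ψ k + ψ j) ^ 2 := by
    intro k
    have := hψ k; have := hψ j
    positivity
  -- summability of the majorant
  have hsum1 : Summable (fun k : ℕ => r ^ (k - j)) := by
    have h : Summable (fun n : ℕ => r ^ ((n + j) - j)) := by
      simpa using hgeo
    exact (summable_nat_add_iff j).mp h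
  have hgsum : Summable (fun k : ℕ => r ^ (k - j) * r ^ (j - k)) := by
    refine Summable.of_nonneg_of_le hgpos (fun k => ?_) hsum1
    have h1 : r ^ (j - k) ≤ 1 := pow_le_one₀ hr0.le hr1.le
    nlinarith [pow_pos hr0 (k - j), pow_pos hr0 (j - k)]
  have hasum : Summable (fun k : ℕ => ψ k * ψ j / (ψ k + ψ j) ^ 2) :=
    Summable.of_nonneg_of_le hapos bound hgsum
  -- compare the sums
  have h1 : ∑' k : ℕ, ψ k * ψ j / (ψ k + ψ j) ^ 2
      ≤ ∑' k : ℕ, r ^ (k - j) * r ^ (j - k) :=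
    Summable.tsum_le_tsum bound hasum hgsum
  refine h1.trans ?_
  -- split the majorant sum at j
  have hsplit := Summable.sum_add_tsum_nat_add (f := fun k : ℕ => r ^ (k - j) * r ^ (j - k)) j hgsum
  rw [← hsplit]
  have htail : ∑' k : ℕ, r ^ ((k + j) - j) * r ^ (j - (k + j)) = (1 - r)⁻¹ := by
    have : ∀ k : ℕ, r ^ ((k + j) - j) * r ^ (j - (k + j)) = r ^ k := by
      intro k
      have h1 : (k + j) - j = k := by omega
      have h2 : j - (k + j) = 0 := by omega
      rw [h1, h2, pow_zero, mul_one]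
    rw [tsum_congr this, tsum_geometric_of_lt_one hr0.le hr1]
  have hhead : ∑ k ∈ Finset.range j, r ^ (k - j) * r ^ (j - k) ≤ (1 - r)⁻¹ := by
    calc ∑ k ∈ Finset.range j, r ^ (k - j) * r ^ (j - k)
        = ∑ k ∈ Finset.range j, r ^ (j - k) := by
          refine Finset.sum_congr rfl fun k hk => ?_
          rw [Finset.mem_range] at hk
          have h1 : k - j = 0 := by omega
          rw [h1, pow_zero, one_mul]
      _ = ∑ k ∈ Finset.range j, r ^ (k + 1) := by
          rw [← Finset.sum_range_reflect (fun k => r ^ (k + 1)) j]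
          refine Finset.sum_congr rfl fun k hk => ?_
          rw [Finset.mem_range] at hk
          congr 1
          omega
      _ ≤ ∑ k ∈ Finset.range j, r ^ k := by
          refine Finset.sum_le_sum fun k _ => ?_
          exact pow_le_pow_of_le_one hr0.le hr1.le (by omega)
      _ ≤ ∑' k : ℕ, r ^ k := Summable.sum_le_tsum _ (fun k _ => by positivity) hgeo
      _ = (1 - r)⁻¹ := tsum_geometric_of_lt_one hr0.le hr1
  rw [htail]
  linarith
end

section
/- Let δ > 0 and let ψ: ℕ → ℝ_{>0} satisfy ψ(k+1) ≥ (1+δ)ψ(k) and suppose for all k ≠ j, ψ taking the role of a length satisfies b(k,j) ≥ δ max(ψ(k), ψ(j)) where b(k,j) ≥ |ψ(k) − ψ(j)|. Then for every t > 0, sup_j ∑_k e^{-t·b(k,j)}(1 − e^{-tψ(k)})(1 − e^{-tψ(j)}) ≤ C_δ for a constant C_δ depending only on δ. -/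
/-!
Write `x k = t ψ k`; it is again lacunary with ratio `1 + δ`. The diagonal term is at most `1`.
Off the diagonal, `b k j ≥ δ ψ k` bounds the term both by `x k` (from `1 - e^{-x} ≤ x`) and
by `e^{-δ x k}`. Where `x k ≤ 1`, lacunarity makes `x k` decay geometrically below the largest
such index, so these terms sum to at most `(1 + δ) / δ`. Where `x k > 1`, it gives
`x k ≥ 1 + (k - L) δ` above the smallest such index `L`, so the terms `e^{-δ x k}` are dominated
by the geometric series of ratio `e^{-δ²}`.
-/

open Finset Real

theorem sum_pow_le_inv_one_sub_of_injOn {r : ℝ} (hr₀ : 0 ≤ r) (hr₁ : r < 1) {s : Finset ℕ}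
    {f : ℕ → ℕ} (hf : Set.InjOn f s) : ∑ k ∈ s, r ^ f k ≤ (1 - r)⁻¹ :=
  calc ∑ k ∈ s, r ^ f k = ∑ m ∈ s.image f, r ^ m := (sum_image hf).symm
    _ ≤ ∑' m, r ^ m :=
        (summable_geometric_of_lt_one hr₀ hr₁).sum_le_tsum _ fun m _ => pow_nonneg hr₀ m
    _ = (1 - r)⁻¹ := tsum_geometric_of_lt_one hr₀ hr₁

section Lacunary

variable {δ : ℝ} {x : ℕ → ℝ}

theorem pow_mul_le_of_lacunary (hδ : 0 ≤ 1 + δ) (hx : ∀ k, (1 + δ) * x k ≤ x (k + 1))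
    {k l : ℕ} (hkl : k ≤ l) : (1 + δ) ^ (l - k) * x k ≤ x l := by
  have h := geom_le (u := fun i => x (k + i)) hδ (l - k) fun i _ => hx (k + i)
  simpa [Nat.add_sub_cancel' hkl] using h

theorem sum_le_of_lacunary_of_le_one (hδ : 0 < δ) (hx : ∀ k, (1 + δ) * x k ≤ x (k + 1))
    {s : Finset ℕ} (hs : ∀ k ∈ s, x k ≤ 1) : ∑ k ∈ s, x k ≤ (1 + δ) / δ := by
  rcases s.eq_empty_or_nonempty with rfl | hne
  · simpa using by positivity
  set K := s.max' hne
  have hle : ∀ k ∈ s, x k ≤ (1 + δ)⁻¹ ^ (K - k) := fun k hk => by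
    rw [inv_pow, ← one_div, le_div_iff₀' (by positivity)]
    exact (pow_mul_le_of_lacunary (by linarith) hx (s.le_max' k hk)).trans (hs K (s.max'_mem hne))
  have hinj : Set.InjOn (K - ·) s := fun k hk l hl hkl => by
    have := s.le_max' k hk
    have := s.le_max' l hl
    simp only at hkl
    omega
  calc ∑ k ∈ s, x k ≤ ∑ k ∈ s, (1 + δ)⁻¹ ^ (K - k) := sum_le_sum hle
    _ ≤ (1 - (1 + δ)⁻¹)⁻¹ :=
        sum_pow_le_inv_one_sub_of_injOn (by positivity) (inv_lt_one_of_one_lt₀ (by linarith)) hinj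
    _ = (1 + δ) / δ := by field_simp [hδ.ne']; ring

theorem sum_exp_neg_mul_le_of_lacunary_of_one_le (hδ : 0 < δ)
    (hx : ∀ k, (1 + δ) * x k ≤ x (k + 1)) {s : Finset ℕ} (hs : ∀ k ∈ s, 1 ≤ x k) :
    ∑ k ∈ s, exp (-(δ * x k)) ≤ (1 - exp (-δ ^ 2))⁻¹ := by
  have hr : exp (-δ ^ 2) < 1 := exp_lt_one_iff.2 (neg_neg_of_pos (pow_pos hδ 2))
  rcases s.eq_empty_or_nonempty with rfl | hne
  · simpa using hr.le
  set L := s.min' hne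
  have hle : ∀ k ∈ s, exp (-(δ * x k)) ≤ exp (-δ ^ 2) ^ (k - L) := fun k hk => by
    have hbern := one_add_mul_le_pow (by linarith : -2 ≤ δ) (k - L)
    have hlac : (1 + δ) ^ (k - L) * x L ≤ x k :=
      pow_mul_le_of_lacunary (by linarith) hx (s.min'_le k hk)
    have hpow : 0 ≤ (1 + δ) ^ (k - L) := by positivity
    have hgrowth : 1 + (k - L : ℕ) * δ ≤ x k := by
      nlinarith [mul_le_mul_of_nonneg_left (hs L (s.min'_mem hne)) hpow]
    rw [← exp_nat_mul, exp_le_exp]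
    nlinarith [mul_le_mul_of_nonneg_left hgrowth hδ.le]
  have hinj : Set.InjOn (· - L) s := fun k hk l hl hkl => by
    have := s.min'_le k hk
    have := s.min'_le l hl
    simp only at hkl
    omega
  calc ∑ k ∈ s, exp (-(δ * x k)) ≤ ∑ k ∈ s, exp (-δ ^ 2) ^ (k - L) := sum_le_sum hle
    _ ≤ (1 - exp (-δ ^ 2))⁻¹ :=
        sum_pow_le_inv_one_sub_of_injOn (exp_pos _).le hr hinj

theorem sum_min_exp_neg_mul_le_of_lacunary (hδ : 0 < δ) (hx : ∀ k, (1 + δ) * x k ≤ x (k + 1))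
    (s : Finset ℕ) :
    ∑ k ∈ s, min (x k) (exp (-(δ * x k))) ≤ (1 + δ) / δ + (1 - exp (-δ ^ 2))⁻¹ := by
  rw [← sum_filter_add_sum_filter_not s fun k => x k ≤ 1]
  gcongr
  · exact (sum_le_sum fun k _ => min_le_left _ _).trans
      (sum_le_of_lacunary_of_le_one hδ hx fun k hk => (mem_filter.1 hk).2)
  · exact (sum_le_sum fun k _ => min_le_right _ _).trans
      (sum_exp_neg_mul_le_of_lacunary_of_one_le hδ hx fun k hk =>
        (not_le.1 (mem_filter.1 hk).2).le)

end Lacunary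

section Kernel

variable {B P Q : ℝ}

theorem one_sub_exp_neg_nonneg (hP : 0 ≤ P) : 0 ≤ 1 - exp (-P) :=
  sub_nonneg.2 (exp_le_one_iff.2 (neg_nonpos.2 hP))

theorem one_sub_exp_neg_le_one : 1 - exp (-P) ≤ 1 :=
  sub_le_self _ (exp_pos _).le

theorem exp_neg_le_one (hB : 0 ≤ B) : exp (-B) ≤ 1 :=
  exp_le_one_iff.2 (neg_nonpos.2 hB)

theorem kernel_nonneg (hP : 0 ≤ P) (hQ : 0 ≤ Q) :
    0 ≤ exp (-B) * (1 - exp (-P)) * (1 - exp (-Q)) :=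
  mul_nonneg (mul_nonneg (exp_pos _).le (one_sub_exp_neg_nonneg hP)) (one_sub_exp_neg_nonneg hQ)

theorem kernel_le_one (hB : 0 ≤ B) (hP : 0 ≤ P) (hQ : 0 ≤ Q) :
    exp (-B) * (1 - exp (-P)) * (1 - exp (-Q)) ≤ 1 :=
  mul_le_one₀
    (mul_le_one₀ (exp_neg_le_one hB) (one_sub_exp_neg_nonneg hP) one_sub_exp_neg_le_one)
    (one_sub_exp_neg_nonneg hQ) one_sub_exp_neg_le_one

theorem kernel_le_min {δ : ℝ} (hB : 0 ≤ B) (hP : 0 ≤ P) (hδP : δ * P ≤ B) :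
    exp (-B) * (1 - exp (-P)) * (1 - exp (-Q)) ≤ min P (exp (-(δ * P))) := by
  have hPQ : exp (-B) * (1 - exp (-P)) * (1 - exp (-Q)) ≤ exp (-B) * (1 - exp (-P)) :=
    mul_le_of_le_one_right (mul_nonneg (exp_pos _).le (one_sub_exp_neg_nonneg hP))
      one_sub_exp_neg_le_one
  refine le_min (hPQ.trans ?_) (hPQ.trans ?_)
  · exact (mul_le_of_le_one_left (one_sub_exp_neg_nonneg hP) (exp_neg_le_one hB)).trans
      (by linarith [one_sub_le_exp_neg P])
  · exact (mul_le_of_le_one_right (exp_pos _).le one_sub_exp_neg_le_one).trans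
      (exp_le_exp.2 (neg_le_neg hδP))

end Kernel

/-- the key kernel estimate in the BMO bound for lacunary
Fourier series.  For a lacunary sequence ψ with ratio 1+δ and a symbol
b(k,j) ≥ δ·max(ψ k, ψ j) (for k ≠ j) satisfying b(k,j) ≥ |ψ k − ψ j|, the
row sums of e^{-t b(k,j)}(1−e^{-tψ k})(1−e^{-tψ j}) are bounded uniformly in
t by a constant depending only on δ. -/
theorem bmo_kernel_row_sums_bounded (δ : ℝ) (hδ : 0 < δ) :
    ∃ C : ℝ, ∀ (ψ : ℕ → ℝ) (b : ℕ → ℕ → ℝ),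
      (∀ k, 0 < ψ k) → (∀ k, (1 + δ) * ψ k ≤ ψ (k + 1)) →
      (∀ k j, k ≠ j → δ * max (ψ k) (ψ j) ≤ b k j) →
      (∀ k j, |ψ k - ψ j| ≤ b k j) →
      ∀ t : ℝ, 0 < t → ∀ j : ℕ,
        ∑' k : ℕ, Real.exp (-(t * b k j)) * (1 - Real.exp (-(t * ψ k)))
            * (1 - Real.exp (-(t * ψ j))) ≤ C := by
  refine ⟨1 + ((1 + δ) / δ + (1 - exp (-δ ^ 2))⁻¹),
    fun ψ b hψ hlac hmax habs t ht j => ?_⟩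
  set a : ℕ → ℝ :=
    fun k => exp (-(t * b k j)) * (1 - exp (-(t * ψ k))) * (1 - exp (-(t * ψ j)))
  have htψ : ∀ k, 0 ≤ t * ψ k := fun k => (mul_pos ht (hψ k)).le
  have htb : ∀ k, 0 ≤ t * b k j := fun k => mul_nonneg ht.le ((abs_nonneg _).trans (habs k j))
  have htlac : ∀ k, (1 + δ) * (t * ψ k) ≤ t * ψ (k + 1) := fun k => by
    rw [mul_left_comm]; exact mul_le_mul_of_nonneg_left (hlac k) ht.le
  have hoff : ∀ k ≠ j, δ * (t * ψ k) ≤ t * b k j := fun k hk => by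
    rw [mul_left_comm]
    exact mul_le_mul_of_nonneg_left
      ((mul_le_mul_of_nonneg_left (le_max_left _ _) hδ.le).trans (hmax k j hk)) ht.le
  refine Real.tsum_le_of_sum_le (fun k => kernel_nonneg (htψ k) (htψ j)) fun s => ?_
  calc ∑ k ∈ s, a k ≤ ∑ k ∈ insert j s, a k :=
        sum_le_sum_of_subset_of_nonneg (subset_insert j s)
          fun k _ _ => kernel_nonneg (htψ k) (htψ j)
    _ = a j + ∑ k ∈ (insert j s).erase j, a k := (add_sum_erase _ a (mem_insert_self j s)).symm
    _ ≤ 1 + ∑ k ∈ (insert j s).erase j, min (t * ψ k) (exp (-(δ * (t * ψ k)))) := by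
        gcongr with k hk
        · exact kernel_le_one (htb j) (htψ j) (htψ j)
        · exact kernel_le_min (htb k) (htψ k) (hoff k (ne_of_mem_erase hk))
    _ ≤ 1 + ((1 + δ) / δ + (1 - exp (-δ ^ 2))⁻¹) := by
        gcongr
        exact sum_min_exp_neg_mul_le_of_lacunary hδ htlac _
end

section
/- Let δ > 0 and let (j_k) ⊂ ℕ satisfy j_{k+1} ≥ (1+δ) j_k with j_1 ≥ 1. For t > 0, split the indices: ∑_{k : t j_k ≤ 1} t j_k ≤ 1 + 1/δ and ∑_{k : t j_k > 1} e^{-t δ j_k} ≤ 1/(1 − e^{-δ²}). Hence ∑_{k : t j_k ≤ 1} t j_k + ∑_{k : t j_k > 1} e^{-t δ j_k} ≤ 1 + δ^{-1} + 1/(1 − e^{-δ²}) uniformly in t. -/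
/-!
Put `a k = t * j k`, again lacunary with ratio `q = 1 + δ`, and let `K` be the first index with
`1 < a K`. Below `K` the terms `a k ≤ q^{k-K+1}` are dominated by a geometric series of ratio `q⁻¹`;
from `K` on, `a (K + m) ≥ q ^ m ≥ 1 + m δ`, so `exp (-δ a (K + m)) ≤ exp (-δ²) ^ m`.
-/

open Finset

namespace Lacunary

variable {a : ℕ → ℝ} {q : ℝ}

theorem pow_mul_le (hq : 0 ≤ q) (ha : ∀ k, q * a k ≤ a (k + 1)) (k m : ℕ) :
    q ^ m * a k ≤ a (k + m) := by
  induction m with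
  | zero => simp
  | succ m ih =>
    calc q ^ (m + 1) * a k = q * (q ^ m * a k) := by ring
      _ ≤ q * a (k + m) := mul_le_mul_of_nonneg_left ih hq
      _ ≤ a (k + (m + 1)) := ha (k + m)

theorem monotone (hq : 1 ≤ q) (ha : ∀ k, q * a k ≤ a (k + 1)) (h0 : 0 ≤ a 0) : Monotone a := by
  refine monotone_nat_of_le_succ fun k => ?_
  have hk : 0 ≤ a k := by
    simpa using (mul_nonneg (pow_nonneg (by linarith) k) h0).trans (pow_mul_le (by linarith) ha 0 k)
  exact (le_mul_of_one_le_left hk hq).trans (ha k)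

theorem exists_gt (hq : 1 < q) (ha : ∀ k, q * a k ≤ a (k + 1)) (h0 : 0 < a 0) (c : ℝ) :
    ∃ k, c < a k := by
  obtain ⟨k, hk⟩ :=
    ((tendsto_pow_atTop_atTop_of_one_lt hq).atTop_mul_const h0).eventually_gt_atTop c |>.exists
  exact ⟨k, hk.trans_le (by simpa using pow_mul_le (by linarith) ha 0 k)⟩

theorem exists_threshold (hq : 1 < q) (ha : ∀ k, q * a k ≤ a (k + 1)) (h0 : 0 < a 0) (c : ℝ) :
    ∃ K, ∀ k, c < a k ↔ K ≤ k := by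
  classical
  have hex := exists_gt hq ha h0 c
  refine ⟨Nat.find hex, fun k => ?_⟩
  rw [Nat.find_le_iff]
  exact ⟨fun hk => ⟨k, le_rfl, hk⟩,
    fun ⟨m, hmk, hm⟩ => hm.trans_le (monotone hq.le ha h0.le hmk)⟩

theorem tsum_ite_le_one_le (hq : 1 < q) (ha : ∀ k, q * a k ≤ a (k + 1)) (h0 : 0 < a 0) :
    ∑' k, (if a k ≤ 1 then a k else 0) ≤ 1 / (1 - q⁻¹) := by
  obtain ⟨K, hK⟩ := exists_threshold hq ha h0 1
  have hsmall : ∀ k, a k ≤ 1 ↔ k < K := fun k => by simpa using (hK k).not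
  rw [tsum_eq_sum (s := range K) fun k hk => if_neg (by simpa [hsmall] using hk)]
  have hterm : ∀ k ∈ range K, (if a k ≤ 1 then a k else 0) ≤ q⁻¹ ^ (K - 1 - k) := by
    intro k hk
    have hkK : k < K := mem_range.mp hk
    have hlast : q ^ (K - 1 - k) * a k ≤ 1 := by
      have := pow_mul_le (by linarith) ha k (K - 1 - k)
      rw [show k + (K - 1 - k) = K - 1 by omega] at this
      exact this.trans ((hsmall _).mpr (by omega))
    rw [if_pos ((hsmall k).mpr hkK), inv_pow, ← one_div,
      le_div_iff₀ (pow_pos (by linarith) _), mul_comm]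
    exact hlast
  calc ∑ k ∈ range K, (if a k ≤ 1 then a k else 0)
      ≤ ∑ k ∈ range K, q⁻¹ ^ (K - 1 - k) := sum_le_sum hterm
    _ = ∑ k ∈ Ico 0 K, q⁻¹ ^ k := by rw [sum_range_reflect (q⁻¹ ^ ·) K, range_eq_Ico]
    _ ≤ q⁻¹ ^ 0 / (1 - q⁻¹) :=
      geom_sum_Ico_le_of_lt_one (by positivity) (inv_lt_one_of_one_lt₀ hq)
    _ = 1 / (1 - q⁻¹) := by rw [pow_zero]

theorem tsum_ite_one_lt_exp_le (hq : 1 < q) (ha : ∀ k, q * a k ≤ a (k + 1)) (h0 : 0 < a 0)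
    {c : ℝ} (hc : 0 < c) :
    ∑' k, (if 1 < a k then Real.exp (-(c * a k)) else 0) ≤ 1 / (1 - Real.exp (-(c * (q - 1)))) := by
  obtain ⟨K, hK⟩ := exists_threshold hq ha h0 1
  set g : ℕ → ℝ := fun k => if 1 < a k then Real.exp (-(c * a k)) else 0
  set E := Real.exp (-(c * (q - 1)))
  have hE : E < 1 := Real.exp_lt_one_iff.mpr (by nlinarith)
  have hg_nonneg : ∀ k, 0 ≤ g k := fun k => by positivity
  have htail : ∀ m, g (m + K) ≤ E ^ m := by
    intro m
    have hgrowth : 1 + m * (q - 1) ≤ a (m + K) :=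
      calc 1 + m * (q - 1) ≤ q ^ m := by simpa using one_add_mul_le_pow (a := q - 1) (by linarith) m
        _ ≤ q ^ m * a K := le_mul_of_one_le_right (by positivity) ((hK K).mpr le_rfl).le
        _ ≤ a (m + K) := by rw [add_comm]; exact pow_mul_le (by linarith) ha K m
    simp only [g, if_pos ((hK _).mpr (Nat.le_add_left K m)), E, ← Real.exp_nat_mul]
    exact Real.exp_le_exp.mpr (by nlinarith)
  have hshift : ∑' m, g (m + K) = ∑' k, g k := by
    refine (add_left_injective K).tsum_eq fun k hk => ⟨k - K, ?_⟩
    have : K ≤ k := by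
      by_contra hkK
      exact hk (if_neg fun h => hkK ((hK k).mp h))
    exact Nat.sub_add_cancel this
  have hgeom := summable_geometric_of_lt_one (Real.exp_pos _).le hE
  rw [← hshift, one_div, ← tsum_geometric_of_lt_one (Real.exp_pos _).le hE]
  exact Summable.tsum_le_tsum htail
    (hgeom.of_nonneg_of_le (fun m => hg_nonneg _) htail) hgeom

end Lacunary

/-- for a lacunary sequence (j_k) with j_1 ≥ 1 and ratio 1+δ,
both the small-frequency sum ∑_{tj_k ≤ 1} t j_k ≤ 1 + 1/δ and the
large-frequency sum ∑_{tj_k > 1} e^{-tδ j_k} ≤ 1/(1−e^{-δ²}) hold, hence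
their total is at most 1 + δ⁻¹ + 1/(1−e^{-δ²}) uniformly in t > 0. -/
theorem lacunary_split_bound (δ : ℝ) (hδ : 0 < δ) (j : ℕ → ℝ)
    (hj1 : 1 ≤ j 0) (hlac : ∀ k, (1 + δ) * j k ≤ j (k + 1))
    (t : ℝ) (ht : 0 < t) :
    (∑' k : ℕ, if t * j k ≤ 1 then t * j k else 0) ≤ 1 + 1 / δ ∧
    (∑' k : ℕ, if 1 < t * j k then Real.exp (-(t * δ * j k)) else 0) ≤
      1 / (1 - Real.exp (-δ ^ 2)) ∧
    (∑' k : ℕ, if t * j k ≤ 1 then t * j k else 0) +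
      (∑' k : ℕ, if 1 < t * j k then Real.exp (-(t * δ * j k)) else 0) ≤
      1 + δ⁻¹ + 1 / (1 - Real.exp (-δ ^ 2)) := by
  have hq : 1 < 1 + δ := by linarith
  have ha : ∀ k, (1 + δ) * (t * j k) ≤ t * j (k + 1) := fun k => by
    rw [mul_left_comm]; exact mul_le_mul_of_nonneg_left (hlac k) ht.le
  have h0 : 0 < t * j 0 := mul_pos ht (by linarith)
  have hsmall : (∑' k : ℕ, if t * j k ≤ 1 then t * j k else 0) ≤ 1 + 1 / δ := by
    have := Lacunary.tsum_ite_le_one_le hq ha h0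
    rwa [show 1 / (1 - (1 + δ)⁻¹) = 1 + 1 / δ by
      field_simp
      rw [add_sub_cancel_left]
      field_simp
      ring] at this
  have hlarge : (∑' k : ℕ, if 1 < t * j k then Real.exp (-(t * δ * j k)) else 0) ≤
      1 / (1 - Real.exp (-δ ^ 2)) := by
    have := Lacunary.tsum_ite_one_lt_exp_le hq ha h0 hδ
    simp only [add_sub_cancel_left, ← sq] at this
    simpa only [mul_assoc, mul_left_comm δ t] using this
  exact ⟨hsmall, hlarge, by rw [← one_div]; linarith⟩
end
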